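/- arXiv:2605.30402 — 4 statements merged into one kernel-verified Lean document; each statement's English description precedes it below -/
import Mathlib

section
/- Let λ ≥ -1/2 be a real number and let n ≥ 3. If T is a tree with n vertices and maximum degree Δ with Δ < n-1, then GRM_λ(T) ≥ n(2+λ)² − 3(2+λ) + (1+λ)(Δ² − 3Δ − λ). -/
open SimpleGraph

/-- Degree of a vertex (classical decidability). -/
noncomputable def deg {V : Type*} [Fintype V] (G : SimpleGraph V) (v : V) : ℕ :=
  letI := Classical.decEq V
  letI : DecidableRel G.Adj := Classical.decRel _
  G.degree v

/-- Maximum degree of a graph (classical decidability). -/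
noncomputable def maxDeg {V : Type*} [Fintype V] (G : SimpleGraph V) : ℕ :=
  letI := Classical.decEq V
  letI : DecidableRel G.Adj := Classical.decRel _
  G.maxDegree

/-- The general reduced second Zagreb index
`GRM_λ(G) = Σ_{ab ∈ E(G)} (deg a + λ)(deg b + λ)`. -/
noncomputable def GRM {V : Type*} [Fintype V] (l : ℝ) (G : SimpleGraph V) : ℝ :=
  letI := Classical.decEq V
  letI : DecidableRel G.Adj := Classical.decRel _
  ∑ e ∈ G.edgeFinset,
    Sym2.lift ⟨fun a b => ((G.degree a : ℝ) + l) * ((G.degree b : ℝ) + l),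
      fun a b => by ring⟩ e

/-- A unicyclic graph: connected with exactly as many edges as vertices. -/
def IsUnicyclic {V : Type*} [Fintype V] (G : SimpleGraph V) : Prop :=
  G.Connected ∧ G.edgeSet.ncard = Fintype.card V

/-- A vertex lies on a cycle of `G`. -/
def OnCycle {V : Type*} (G : SimpleGraph V) (v : V) : Prop :=
  ∃ (u : V) (w : G.Walk u u), w.IsCycle ∧ v ∈ w.support


/-!
Summing over darts (edges with an orientation) and writing `a, b` for the degrees of the two
ends, `(a + λ)(b + λ) = (a - 1)(b - 1) + (1 + λ)(a + b) + λ² - 1`, hence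
`2 GRM_λ(T) = Σ (a - 1)(b - 1) + 2(1 + λ) Σ_v d(v)² + 2(λ² - 1)(n - 1)`,
and as `1 + λ ≥ 0` it suffices to bound both sums from below.
Since `(k - 1)(k - 2) ≥ 0` for every integer `k`, keeping only a vertex of maximum degree in
`Σ_v (d(v) - 1)(d(v) - 2)` gives `Σ_v d(v)² ≥ Δ² - 3Δ + 4n - 4`.
Since `Δ < n - 1`, `T` is not a star, so every vertex has a neighbour that is not a leaf; counting
the darts between non-leaves then gives `Σ (a - 1)(b - 1) ≥ 2(n - 3)`.
-/

open Finset

namespace SimpleGraph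

variable {V : Type*} {G : SimpleGraph V}

theorem Reachable.mem_of_forall_adj_mem {s : Set V} (hs : ∀ x y, G.Adj x y → x ∈ s → y ∈ s)
    {u v : V} (h : G.Reachable u v) (hu : u ∈ s) : v ∈ s := by
  obtain ⟨p⟩ := h
  induction p with
  | nil => exact hu
  | cons hadj _ ih => exact ih (hs _ _ hadj hu)

variable [Fintype V] [DecidableRel G.Adj]

theorem sum_dart_symm {M : Type*} [AddCommMonoid M] (f : G.Dart → M) :
    ∑ d : G.Dart, f d.symm = ∑ d : G.Dart, f d :=
  Equiv.sum_comp (Function.Involutive.toPerm _ Dart.symm_involutive) f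

theorem maxDegree_sq_sub_add_le_sum_degree_sq [Nonempty V] :
    (G.maxDegree : ℝ) ^ 2 - 3 * G.maxDegree + 2 + 6 * #G.edgeFinset - 2 * Fintype.card V
      ≤ ∑ v, (G.degree v : ℝ) ^ 2 := by
  have hnonneg (k : ℕ) : 0 ≤ ((k : ℝ) - 1) * (k - 2) := by
    rcases le_or_gt k 1 with hk | hk
    · have : (k : ℝ) ≤ 1 := by exact_mod_cast hk
      nlinarith
    · have : (2 : ℝ) ≤ k := by exact_mod_cast hk
      nlinarith
  obtain ⟨v₀, hv₀⟩ := G.exists_maximal_degree_vertex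
  have hv₀_le := single_le_sum (fun v _ => hnonneg (G.degree v)) (mem_univ v₀)
  have hexpand : ∑ v, ((G.degree v : ℝ) - 1) * (G.degree v - 2)
      = ∑ v, (G.degree v : ℝ) ^ 2 - 3 * ∑ v, (G.degree v : ℝ) + 2 * Fintype.card V := by
    simp only [show ∀ y : ℝ, (y - 1) * (y - 2) = y ^ 2 - 3 * y + 2 from fun y => by ring,
      sum_add_distrib, sum_sub_distrib, ← mul_sum, sum_const, card_univ, nsmul_eq_mul]
    ring
  have hsum : ∑ v, (G.degree v : ℝ) = 2 * #G.edgeFinset := by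
    exact_mod_cast G.sum_degrees_eq_twice_card_edges
  rw [hv₀]
  linarith

variable (G) in
def internalIndicator (v : V) : ℝ := if 2 ≤ G.degree v then 1 else 0

theorem internalIndicator_mem (v : V) :
    G.internalIndicator v = 0 ∨ G.internalIndicator v = 1 := by
  unfold internalIndicator
  split_ifs <;> simp

theorem internalIndicator_cases {v : V} (hv : 0 < G.degree v) :
    (G.internalIndicator v = 1 ∧ 2 ≤ (G.degree v : ℝ))
      ∨ (G.internalIndicator v = 0 ∧ (G.degree v : ℝ) = 1) := by
  by_cases h : 2 ≤ G.degree v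
  · exact .inl ⟨if_pos h, by exact_mod_cast h⟩
  · exact .inr ⟨if_neg h, by exact_mod_cast (by omega : G.degree v = 1)⟩

variable [DecidableEq V]

theorem sum_dart_fst {M : Type*} [AddCommMonoid M] (f : V → M) :
    ∑ d : G.Dart, f d.fst = ∑ v, G.degree v • f v := by
  rw [← sum_fiberwise univ (fun d : G.Dart => d.fst)]
  refine sum_congr rfl fun v _ => ?_
  rw [sum_congr rfl fun d hd => congrArg f (mem_filter.mp hd).2, sum_const,
    dart_fst_fiber_card_eq_degree]

theorem sum_dart_edge {M : Type*} [AddCommMonoid M] (f : Sym2 V → M) :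
    ∑ d : G.Dart, f d.edge = 2 • ∑ e ∈ G.edgeFinset, f e := by
  rw [← sum_fiberwise_of_maps_to (t := G.edgeFinset) fun d _ => mem_edgeFinset.mpr d.edge_mem,
    smul_sum]
  refine sum_congr rfl fun e he => ?_
  rw [sum_congr rfl fun d hd => congrArg f (mem_filter.mp hd).2, sum_const,
    dart_edge_fiber_card G e (mem_edgeFinset.mp he)]

theorem sum_le_sum_dart_mul_of_exists_adj {f g : V → ℝ} (hf : ∀ v, 0 ≤ f v)
    (hg : ∀ v, 0 ≤ g v) (h : ∀ v, ∃ w, G.Adj v w ∧ 1 ≤ g w) :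
    ∑ v, f v ≤ ∑ d : G.Dart, f d.fst * g d.snd := by
  rw [← sum_fiberwise univ (fun d : G.Dart => d.fst)]
  refine sum_le_sum fun v _ => ?_
  obtain ⟨w, hvw, hw⟩ := h v
  calc f v ≤ f v * g w := le_mul_of_one_le_right (hf v) hw
    _ ≤ _ := single_le_sum (f := fun d : G.Dart => f d.fst * g d.snd)
        (fun d _ => mul_nonneg (hf _) (hg _)) (a := ⟨(v, w), hvw⟩) (by simp)

theorem Connected.exists_adj_two_le_degree (hG : G.Connected)
    (hlt : G.maxDegree + 1 < Fintype.card V) (v : V) : ∃ w, G.Adj v w ∧ 2 ≤ G.degree w := by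
  by_contra! hleaf
  have hclosed : ∀ x y, G.Adj x y → x ∈ (insert v (G.neighborFinset v) : Set V) →
      y ∈ (insert v (G.neighborFinset v) : Set V) := by
    rintro x y hxy (rfl | hx)
    · simp [hxy]
    · have hvx : G.Adj v x := by simpa using hx
      have hcard : #(G.neighborFinset x) ≤ 1 := by
        rw [card_neighborFinset_eq_degree]
        exact Nat.lt_succ_iff.mp (hleaf x hvx)
      left
      exact card_le_one.mp hcard y (by simpa using hxy) v (by simpa using hvx.symm)
  have hall : (univ : Finset V) ⊆ insert v (G.neighborFinset v) := fun u _ => by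
    simpa using (hG v u).mem_of_forall_adj_mem hclosed (by simp)
  have := (card_le_card hall).trans (card_insert_le _ _)
  rw [card_univ, card_neighborFinset_eq_degree] at this
  have := G.degree_le_maxDegree v
  omega

theorem sum_dart_degree_add_mul_degree_add (l : ℝ) :
    ∑ d : G.Dart, ((G.degree d.fst : ℝ) + l) * (G.degree d.snd + l)
      = ∑ d : G.Dart, ((G.degree d.fst : ℝ) - 1) * (G.degree d.snd - 1)
        + 2 * (1 + l) * ∑ v, (G.degree v : ℝ) ^ 2 + 2 * (l ^ 2 - 1) * #G.edgeFinset := by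
  have hsnd : ∑ d : G.Dart, (G.degree d.snd : ℝ) = ∑ d : G.Dart, (G.degree d.fst : ℝ) :=
    sum_dart_symm (fun d => (G.degree d.fst : ℝ))
  have hfst : ∑ d : G.Dart, (G.degree d.fst : ℝ) = ∑ v, (G.degree v : ℝ) ^ 2 := by
    rw [sum_dart_fst (fun v => (G.degree v : ℝ))]
    simp only [nsmul_eq_mul, sq]
  have hcard : ∑ _d : G.Dart, (1 : ℝ) = 2 * #G.edgeFinset := by
    simp [dart_card_eq_twice_card_edges]
  calc ∑ d : G.Dart, ((G.degree d.fst : ℝ) + l) * (G.degree d.snd + l)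
      = ∑ d : G.Dart, (((G.degree d.fst : ℝ) - 1) * (G.degree d.snd - 1)
          + (1 + l) * (G.degree d.fst + G.degree d.snd) + (l ^ 2 - 1) * 1) :=
        sum_congr rfl fun _ _ => by ring
    _ = _ := by
      rw [sum_add_distrib, sum_add_distrib, ← mul_sum, ← mul_sum, sum_add_distrib, hsnd, hfst,
        hcard]
      ring

theorem le_sum_dart_internalIndicator_mul :
    2 * ∑ v, (G.degree v : ℝ) * G.internalIndicator v - 2 * #G.edgeFinset
      ≤ ∑ d : G.Dart, G.internalIndicator d.fst * G.internalIndicator d.snd := by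
  have hpair (d : G.Dart) : G.internalIndicator d.fst + G.internalIndicator d.snd - 1
      ≤ G.internalIndicator d.fst * G.internalIndicator d.snd := by
    rcases G.internalIndicator_mem d.fst with ha | ha <;>
      rcases G.internalIndicator_mem d.snd with hb | hb <;> simp only [ha, hb] <;> norm_num
  have hsnd := sum_dart_symm (G := G) fun d => G.internalIndicator d.fst
  simp only [Dart.symm_toProd, Prod.fst_swap] at hsnd
  have hfst := sum_dart_fst (G := G) G.internalIndicator
  simp only [nsmul_eq_mul] at hfst
  have hcard : ∑ _d : G.Dart, (1 : ℝ) = 2 * #G.edgeFinset := by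
    simp [dart_card_eq_twice_card_edges]
  calc _ = ∑ d : G.Dart, (G.internalIndicator d.fst + G.internalIndicator d.snd - 1) := by
        rw [sum_sub_distrib, sum_add_distrib, hsnd, hfst, hcard]
        ring
    _ ≤ _ := sum_le_sum fun d _ => hpair d

theorem six_mul_card_edgeFinset_sub_le_sum_dart (h : ∀ v, ∃ w, G.Adj v w ∧ 2 ≤ G.degree w) :
    6 * (#G.edgeFinset : ℝ) - 4 * Fintype.card V
      ≤ ∑ d : G.Dart, ((G.degree d.fst : ℝ) - 1) * (G.degree d.snd - 1) := by
  set x : V → ℝ := fun v => G.degree v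
  set p := G.internalIndicator
  have hp (v : V) : (p v = 1 ∧ 2 ≤ x v) ∨ (p v = 0 ∧ x v = 1) :=
    internalIndicator_cases ((h v).elim fun _ hw => hw.1.degree_pos_left)
  -- `(a - 1)(b - 1) = (a - 2)(b - 2) + (a - 2) + (b - 2) + 1`, and darts at a leaf contribute `0`
  have hdart (d : G.Dart) : p d.fst * (x d.fst - 2) * p d.snd
      + p d.snd * (x d.snd - 2) * p d.fst + p d.fst * p d.snd
      ≤ (x d.fst - 1) * (x d.snd - 1) := by
    rcases hp d.fst with ⟨ha, ha'⟩ | ⟨ha, ha'⟩ <;> rcases hp d.snd with ⟨hb, hb'⟩ | ⟨hb, hb'⟩ <;>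
      simp only [ha, hb, ha', hb'] <;> nlinarith
  have hinternal : ∑ v, p v * (x v - 2) ≤ ∑ d : G.Dart, p d.fst * (x d.fst - 2) * p d.snd :=
    sum_le_sum_dart_mul_of_exists_adj
      (fun v => by rcases hp v with ⟨hv, hv'⟩ | ⟨hv, -⟩ <;> simp only [hv] <;> linarith)
      (fun v => by rcases hp v with ⟨hv, -⟩ | ⟨hv, -⟩ <;> simp only [hv] <;> norm_num)
      (fun v => (h v).imp fun w ⟨hvw, hw⟩ => ⟨hvw, by simp [p, internalIndicator, hw]⟩)
  have hsymm := sum_dart_symm (G := G) fun d => p d.fst * (x d.fst - 2) * p d.snd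
  simp only [Dart.symm_toProd, Prod.fst_swap, Prod.snd_swap] at hsymm
  have hvertex (v : V) : 2 * (p v * (x v - 2)) + 2 * (x v * p v) = 4 * x v - 4 := by
    rcases hp v with ⟨hv, -⟩ | ⟨hv, hv'⟩
    · simp only [hv]; ring
    · simp only [hv, hv']; ring
  have hvertices : 2 * ∑ v, p v * (x v - 2) + 2 * ∑ v, x v * p v
      = 4 * ∑ v, x v - 4 * Fintype.card V := by
    rw [mul_sum, mul_sum, ← sum_add_distrib, sum_congr rfl fun v _ => hvertex v, sum_sub_distrib,
      ← mul_sum, sum_const, card_univ, nsmul_eq_mul]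
    ring
  have hsum : ∑ v, x v = 2 * #G.edgeFinset := by
    simp only [x]
    exact_mod_cast G.sum_degrees_eq_twice_card_edges
  have hdarts := sum_le_sum fun d (_ : d ∈ univ) => hdart d
  simp only [sum_add_distrib] at hdarts
  show _ ≤ ∑ d : G.Dart, (x d.fst - 1) * (x d.snd - 1)
  linarith [G.le_sum_dart_internalIndicator_mul]

end SimpleGraph

section GRM

variable {V : Type*} [Fintype V] {G : SimpleGraph V} [DecidableRel G.Adj]

theorem maxDeg_eq_maxDegree : maxDeg G = G.maxDegree := by
  rw [maxDeg]
  congr!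

theorem two_mul_GRM [DecidableEq V] (l : ℝ) :
    2 * GRM l G = ∑ d : G.Dart, ((G.degree d.fst : ℝ) + l) * (G.degree d.snd + l) := by
  have h := G.sum_dart_edge
    (Sym2.lift ⟨fun a b => ((G.degree a : ℝ) + l) * (G.degree b + l), fun _ _ => mul_comm _ _⟩)
  simp only [Dart.edge, Sym2.lift_mk, nsmul_eq_mul, Nat.cast_ofNat] at h
  rw [h, GRM]
  congr!

end GRM

theorem stmt0_general {V : Type*} [Fintype V] (l : ℝ) (hl : -1/2 ≤ l)
    (n Δ : ℕ) (T : SimpleGraph V) (hT : T.IsTree)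
    (hcard : Fintype.card V = n) (hmax : maxDeg T = Δ) (hΔ : Δ < n - 1) :
    GRM l T ≥ (n : ℝ) * (2 + l) ^ 2 - 3 * (2 + l)
      + (1 + l) * ((Δ : ℝ) ^ 2 - 3 * (Δ : ℝ) - l) := by
  classical
  rw [maxDeg_eq_maxDegree] at hmax
  have hedges : (#T.edgeFinset : ℝ) = n - 1 := by
    rw [eq_sub_iff_add_eq, ← hcard]
    exact_mod_cast hT.card_edgeFinset
  have : Nonempty V := Fintype.card_pos_iff.mp (by omega)
  have hQ := T.maxDegree_sq_sub_add_le_sum_degree_sq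
  have hP := T.six_mul_card_edgeFinset_sub_le_sum_dart
    (hT.connected.exists_adj_two_le_degree (by omega))
  have hGRM := two_mul_GRM (G := T) l
  rw [hmax, hedges, hcard] at hQ
  rw [hedges, hcard] at hP
  rw [T.sum_dart_degree_add_mul_degree_add, hedges] at hGRM
  linarith [mul_le_mul_of_nonneg_left hQ (by linarith : (0 : ℝ) ≤ 1 + l)]

theorem stmt0 {V : Type*} [Fintype V] (l : ℝ) (hl : -1/2 ≤ l)
    (n Δ : ℕ) (hn : 3 ≤ n) (T : SimpleGraph V) (hT : T.IsTree)
    (hcard : Fintype.card V = n) (hmax : maxDeg T = Δ) (hΔ : Δ < n - 1) :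
    GRM l T ≥ (n : ℝ) * (2 + l) ^ 2 - 3 * (2 + l)
      + (1 + l) * ((Δ : ℝ) ^ 2 - 3 * (Δ : ℝ) - l) :=
  stmt0_general l hl n Δ T hT hcard hmax hΔ
end

section
/- Let λ be a real number, and let 3 ≤ Δ < n-1. If T is a spider tree with n vertices whose center a has degree Δ, such that exactly Δ-1 neighbors of a are leaves and the remaining leg of a is a path of length n-Δ (so exactly one leg has length greater than one), then GRM_λ(T) = n(2+λ)² − 3(2+λ) + (1+λ)(Δ² − 3Δ − λ). -/
open SimpleGraph

/-! Writing every degree as `2 + (d v - 2)` and expanding the products shows, for any graph,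
`GRM_λ(G) = |E| (2+λ)² + (2+λ) Σ_v d_v (d_v - 2) + Σ_{uv ∈ E} (d_u - 2) (d_v - 2)`.
Off the center of the spider every degree is 1 or 2, so `d (d - 2) = d - 2` there and the middle
sum follows from the handshake lemma. In the last sum only edges joining the center to a leaf
survive, because two leaves are never adjacent in a connected graph with more than two vertices. -/

open Finset

namespace SimpleGraph

variable {V : Type*} [Fintype V] {G : SimpleGraph V} [DecidableRel G.Adj]

theorem Preconnected.eq_or_eq_of_adj_of_degree_eq_one (hG : G.Preconnected) {u v : V}
    (huv : G.Adj u v) (hu : G.degree u = 1) (hv : G.degree v = 1) (w : V) : w = u ∨ w = v := by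
  have hclosed : ∀ x, x = u ∨ x = v → ∀ y, G.Adj x y → y = u ∨ y = v := by
    rintro x (rfl | rfl) y hxy
    · exact .inr ((degree_eq_one_iff_existsUnique_adj.mp hu).unique hxy huv)
    · exact .inl ((degree_eq_one_iff_existsUnique_adj.mp hv).unique hxy huv.symm)
  suffices ∀ x y (_ : G.Walk x y), x = u ∨ x = v → y = u ∨ y = v from
    this u w (hG u w).some (.inl rfl)
  intro x y p
  induction p with
  | nil => exact id
  | cons h _ ih => exact fun hx => ih (hclosed _ hx _ h)

theorem IsTree.sum_degree_mul_degree_sub_two (hG : G.IsTree) {a : V}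
    (hdeg : ∀ v ≠ a, G.degree v = 1 ∨ G.degree v = 2) :
    ∑ v, (G.degree v : ℝ) * (G.degree v - 2) = (G.degree a : ℝ) ^ 2 - 3 * G.degree a := by
  have hsum : ∑ v, ((G.degree v : ℝ) - 2) = -2 := by
    have hcard := hG.card_edgeFinset
    rw [sum_sub_distrib, ← Nat.cast_sum, sum_degrees_eq_twice_card_edges, sum_const,
      card_univ, ← hcard]
    push_cast
    ring
  have hrest : ∑ v, ((G.degree v : ℝ) - 1) * (G.degree v - 2) =
      ((G.degree a : ℝ) - 1) * (G.degree a - 2) :=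
    sum_eq_single a (fun v _ hv => by rcases hdeg v hv with h | h <;> simp [h])
      (by simp)
  calc ∑ v, (G.degree v : ℝ) * (G.degree v - 2)
      = ∑ v, (((G.degree v : ℝ) - 2) + ((G.degree v : ℝ) - 1) * (G.degree v - 2)) :=
        sum_congr rfl fun _ _ => by ring
    _ = _ := by rw [sum_add_distrib, hsum, hrest]; ring

variable [DecidableEq V]

theorem sum_edgeFinset_lift_add {M : Type*} [AddCommMonoid M] (f : V → M) :
    ∑ e ∈ G.edgeFinset, Sym2.lift ⟨fun u v => f u + f v, fun _ _ => add_comm _ _⟩ e =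
      ∑ v, G.degree v • f v := by
  calc _ = ∑ d : G.Dart, f d.fst := by
        rw [← sum_fiberwise_of_maps_to (g := Dart.edge) (t := G.edgeFinset)
          (fun d _ => mem_edgeFinset.mpr d.edge_mem)]
        refine sum_congr rfl fun e he => ?_
        induction e using Sym2.ind with
        | _ u v =>
          let d : G.Dart := ⟨(u, v), mem_edgeFinset.mp he⟩
          rw [show s(u, v) = d.edge from rfl, d.edge_fiber, sum_pair d.symm_ne.symm]
          rfl
    _ = _ := by
        rw [← sum_fiberwise (g := fun d : G.Dart => d.fst)]
        refine sum_congr rfl fun v _ => ?_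
        rw [sum_congr rfl fun d hd => by rw [(mem_filter.mp hd).2],
          sum_const, dart_fst_fiber_card_eq_degree]

theorem sum_edgeFinset_lift_add_mul_add {R : Type*} [CommRing R] (c : R) (f : V → R) :
    ∑ e ∈ G.edgeFinset, Sym2.lift ⟨fun u v => (c + f u) * (c + f v), fun _ _ => mul_comm _ _⟩ e =
      #G.edgeFinset * c ^ 2 + c * ∑ v, G.degree v * f v +
        ∑ e ∈ G.edgeFinset, Sym2.lift ⟨fun u v => f u * f v, fun _ _ => mul_comm _ _⟩ e := by
  have hsplit : ∀ e : Sym2 V,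
      Sym2.lift ⟨fun u v => (c + f u) * (c + f v), fun _ _ => mul_comm _ _⟩ e =
        c ^ 2 + c * Sym2.lift ⟨fun u v => f u + f v, fun _ _ => add_comm _ _⟩ e +
          Sym2.lift ⟨fun u v => f u * f v, fun _ _ => mul_comm _ _⟩ e := by
    rintro ⟨u, v⟩
    simp only [Sym2.lift_mk]
    ring
  simp only [hsplit, sum_add_distrib, sum_const, nsmul_eq_mul, ← mul_sum,
    sum_edgeFinset_lift_add]

theorem Preconnected.sum_edgeFinset_lift_degree_sub_two_mul (hG : G.Preconnected) {a : V}
    (hdeg : ∀ v ≠ a, G.degree v = 1 ∨ G.degree v = 2) :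
    ∑ e ∈ G.edgeFinset, Sym2.lift
        ⟨fun u v => ((G.degree u : ℝ) - 2) * (G.degree v - 2), fun _ _ => mul_comm _ _⟩ e =
      -(#{v ∈ G.neighborFinset a | G.degree v = 1} * ((G.degree a : ℝ) - 2)) := by
  set L := {v ∈ G.neighborFinset a | G.degree v = 1}
  have hsub : L.image (fun v => s(a, v)) ⊆ G.edgeFinset := by
    intro e he
    obtain ⟨v, hv, rfl⟩ := mem_image.mp he
    simpa using (mem_filter.mp hv).1
  rw [← sum_subset hsub, sum_image fun _ _ _ _ h => Sym2.congr_right.mp h,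
    sum_congr rfl (g := fun _ => ((G.degree a : ℝ) - 2) * (1 - 2))
      fun v hv => by simp [(mem_filter.mp hv).2]]
  · simp only [sum_const, nsmul_eq_mul]
    ring
  intro e he hne
  induction e using Sym2.ind with
  | _ u v =>
    rw [mem_edgeFinset, mem_edgeSet] at he
    have hmem : ∀ w, G.Adj a w → G.degree w = 1 → s(a, w) ∈ L.image (fun v => s(a, v)) :=
      fun w hw h1 => mem_image_of_mem _ (by simpa [L] using ⟨hw, h1⟩)
    simp only [Sym2.lift_mk, mul_eq_zero, sub_eq_zero]
    by_cases hu : u = a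
    · subst hu
      rcases hdeg v he.ne' with h | h
      · exact absurd (hmem v he h) hne
      · simp [h]
    by_cases hv : v = a
    · subst hv
      rcases hdeg u he.ne with h | h
      · exact absurd (Sym2.eq_swap ▸ hmem u he.symm h) hne
      · simp [h]
    rcases hdeg u hu with hu1 | hu2
    · rcases hdeg v hv with hv1 | hv2
      · rcases hG.eq_or_eq_of_adj_of_degree_eq_one he hu1 hv1 a with rfl | rfl <;> simp_all
      · simp [hv2]
    · simp [hu2]

end SimpleGraph

theorem deg_eq_degree {V : Type*} [Fintype V] (G : SimpleGraph V) [DecidableRel G.Adj] (v : V) :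
    deg G v = G.degree v := by
  unfold deg; congr!

theorem GRM_eq_sum {V : Type*} [Fintype V] [DecidableEq V] (l : ℝ) (G : SimpleGraph V)
    [DecidableRel G.Adj] :
    GRM l G = ∑ e ∈ G.edgeFinset, Sym2.lift
      ⟨fun u v => ((G.degree u : ℝ) + l) * ((G.degree v : ℝ) + l), fun _ _ => mul_comm _ _⟩ e := by
  unfold GRM; congr!

theorem GRM_eq {V : Type*} [Fintype V] [DecidableEq V] (l : ℝ) (G : SimpleGraph V)
    [DecidableRel G.Adj] :
    GRM l G = #G.edgeFinset * (2 + l) ^ 2 + (2 + l) * ∑ v, (G.degree v : ℝ) * (G.degree v - 2) +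
      ∑ e ∈ G.edgeFinset, Sym2.lift
        ⟨fun u v => ((G.degree u : ℝ) - 2) * (G.degree v - 2), fun _ _ => mul_comm _ _⟩ e := by
  rw [GRM_eq_sum, ← sum_edgeFinset_lift_add_mul_add]
  refine sum_congr rfl fun e _ => ?_
  induction e using Sym2.ind with
  | _ u v =>
    simp only [Sym2.lift_mk]
    ring

theorem stmt2_general {V : Type*} [Fintype V] (l : ℝ) (n Δ : ℕ)
    (hΔn : Δ < n - 1) (T : SimpleGraph V) (hT : T.IsTree)
    (hcard : Fintype.card V = n) (a : V) (hdega : deg T a = Δ)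
    (hleaves : {v : V | T.Adj a v ∧ deg T v = 1}.ncard = Δ - 1)
    (hspider : ∀ v : V, v ≠ a → deg T v ≤ 2) :
    GRM l T = (n : ℝ) * (2 + l) ^ 2 - 3 * (2 + l)
      + (1 + l) * ((Δ : ℝ) ^ 2 - 3 * (Δ : ℝ) - l) := by
  classical
  have : Nontrivial V := Fintype.one_lt_card_iff_nontrivial.mp (by omega)
  have hG := hT.connected.preconnected
  simp only [deg_eq_degree] at hdega hleaves hspider
  have hdeg : ∀ v ≠ a, T.degree v = 1 ∨ T.degree v = 2 := fun v hv => by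
    have := hG.degree_pos_of_nontrivial v
    have := hspider v hv
    omega
  have hΔ : 1 ≤ Δ := hdega ▸ hG.degree_pos_of_nontrivial a
  have hL : #{v ∈ T.neighborFinset a | T.degree v = 1} = Δ - 1 := by
    rw [← hleaves, ← Set.ncard_coe_finset]
    congr 1
    ext v
    simp
  have hE : #T.edgeFinset = n - 1 := by
    have := hT.card_edgeFinset
    omega
  rw [GRM_eq, hT.sum_degree_mul_degree_sub_two hdeg, hG.sum_edgeFinset_lift_degree_sub_two_mul hdeg,
    hL, hE, hdega]
  push_cast [hΔ, (by omega : 1 ≤ n)]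
  ring

theorem stmt2 {V : Type*} [Fintype V] (l : ℝ) (n Δ : ℕ)
    (hΔ3 : 3 ≤ Δ) (hΔn : Δ < n - 1) (T : SimpleGraph V) (hT : T.IsTree)
    (hcard : Fintype.card V = n) (a : V) (hdega : deg T a = Δ)
    (hleaves : {v : V | T.Adj a v ∧ deg T v = 1}.ncard = Δ - 1)
    (hspider : ∀ v : V, v ≠ a → deg T v ≤ 2) :
    GRM l T = (n : ℝ) * (2 + l) ^ 2 - 3 * (2 + l)
      + (1 + l) * ((Δ : ℝ) ^ 2 - 3 * (Δ : ℝ) - l) :=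
  stmt2_general l n Δ hΔn T hT hcard a hdega hleaves hspider
end

section
/- Let λ ≥ -1/2 be a real number and let Δ ≥ 3. If T is a spider tree with n vertices and maximum degree Δ whose center has at least two legs of length greater than one (equivalently, the center has at least two neighbors of degree two), then there exists a spider tree T* with n vertices and maximum degree Δ such that GRM_λ(T*) < GRM_λ(T). -/
open SimpleGraph

/-
Let `u` be a neighbour of degree two of the centre `a`, with other neighbour `v`, and let `w` be
a vertex farthest from `a`. Choosing `u` off the path from `a` to `w`, the vertex `w` is a leaf
whose neighbour `x` is not the centre. Replacing the edge `uv` by `wv` hangs the rest of the leg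
through `u` onto the end of the leg through `w`. The result is again a spider with centre `a` of
degree `Δ`, and the only edge weights that change are those of `au`, which drops by `Δ + λ`, and
of `wx`, which grows by `deg x + λ`. Hence `GRM_λ` decreases by `Δ - deg x ≥ Δ - 2 > 0`.
-/

namespace SimpleGraph

section MoveEdge

variable {V : Type*} {G : SimpleGraph V} {u v w x y : V}

def moveEdge (G : SimpleGraph V) (u v w : V) : SimpleGraph V :=
  G.deleteEdges {s(u, v)} ⊔ edge w v

theorem moveEdge_adj : (G.moveEdge u v w).Adj x y ↔
    (G.Adj x y ∧ s(x, y) ≠ s(u, v)) ∨ (s(w, v) = s(x, y) ∧ x ≠ y) := by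
  simp [moveEdge, adj_edge]

theorem edgeSet_moveEdge (hwv : w ≠ v) :
    (G.moveEdge u v w).edgeSet = insert s(w, v) (G.edgeSet \ {s(u, v)}) := by
  rw [moveEdge, edgeSet_sup, edgeSet_deleteEdges, edgeSet_edge_of_ne hwv, Set.union_comm,
    Set.singleton_union]

theorem edgeFinset_moveEdge_sdiff_insert [DecidableEq V] [Fintype G.edgeSet]
    [Fintype (G.moveEdge u v w).edgeSet] (hwv : w ≠ v) (hnadj : ¬G.Adj w v) (B : Finset (Sym2 V)) :
    (G.moveEdge u v w).edgeFinset \ insert s(w, v) B = G.edgeFinset \ insert s(u, v) B := by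
  ext e
  simp only [Finset.mem_sdiff, mem_edgeFinset, edgeSet_moveEdge hwv, Finset.mem_insert,
    Set.mem_insert_iff, Set.mem_sdiff, Set.mem_singleton_iff]
  have : s(w, v) ∉ G.edgeSet := hnadj
  grind

theorem neighborSet_moveEdge_of_ne (hxu : x ≠ u) (hxv : x ≠ v) (hxw : x ≠ w) :
    (G.moveEdge u v w).neighborSet x = G.neighborSet x := by
  ext y
  simp only [mem_neighborSet, moveEdge_adj, Sym2.eq_iff]
  grind

theorem neighborSet_moveEdge_left (huv : G.Adj u v) (hwu : w ≠ u) :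
    (G.moveEdge u v w).neighborSet u = G.neighborSet u \ {v} := by
  ext y
  simp only [mem_neighborSet, moveEdge_adj, Sym2.eq_iff, Set.mem_sdiff, Set.mem_singleton_iff]
  grind [huv.ne]

theorem neighborSet_moveEdge_right (hwu : w ≠ u) (hwv : w ≠ v) :
    (G.moveEdge u v w).neighborSet w = insert v (G.neighborSet w) := by
  ext y
  simp only [mem_neighborSet, moveEdge_adj, Sym2.eq_iff, Set.mem_insert_iff]
  grind

theorem neighborSet_moveEdge_pivot (hwv : w ≠ v) :
    (G.moveEdge u v w).neighborSet v = insert w (G.neighborSet v \ {u}) := by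
  ext y
  simp only [mem_neighborSet, moveEdge_adj, Sym2.eq_iff, Set.mem_insert_iff, Set.mem_sdiff,
    Set.mem_singleton_iff]
  grind [G.loopless]

theorem Preconnected.reachable_deleteEdges_or (hG : G.Preconnected) (u v x : V) :
    (G.deleteEdges {s(u, v)}).Reachable u x ∨ (G.deleteEdges {s(u, v)}).Reachable v x := by
  classical
  obtain ⟨P, hP⟩ := (hG x u).exists_isPath
  by_cases huvP : s(u, v) ∈ P.edges
  · have hvP := P.snd_mem_support_of_mem_edges huvP
    have huP₁ := Walk.endpoint_notMem_support_takeUntil hP hvP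
      (P.adj_of_mem_edges huvP).ne
    refine .inr ⟨((P.takeUntil v hvP).toDeleteEdges {s(u, v)} fun e he h => ?_).reverse⟩
    exact huP₁ (Walk.fst_mem_support_of_mem_edges _ (Set.mem_singleton_iff.mp h ▸ he))
  · exact .inl ⟨(P.toDeleteEdges {s(u, v)} fun e he h =>
      huvP (Set.mem_singleton_iff.mp h ▸ he)).reverse⟩

theorem IsAcyclic.not_reachable_deleteEdges (hG : G.IsAcyclic) (huv : G.Adj u v) :
    ¬(G.deleteEdges {s(u, v)}).Reachable u v :=
  isBridge_iff.mp (isAcyclic_iff_forall_adj_isBridge.mp hG huv)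

theorem IsTree.moveEdge (hG : G.IsTree) (huv : G.Adj u v)
    (hw : (G.deleteEdges {s(u, v)}).Reachable u w) : (G.moveEdge u v w).IsTree := by
  have hsep := hG.isAcyclic.not_reachable_deleteEdges huv
  have hle : G.deleteEdges {s(u, v)} ≤ G.moveEdge u v w := le_sup_left
  have hwv : (G.moveEdge u v w).Adj w v := by
    refine moveEdge_adj.mpr (.inr ⟨rfl, fun h => hsep (h ▸ hw)⟩)
  refine ⟨?_, (hG.isAcyclic.anti (G.deleteEdges_le _)).sup_edge_of_not_reachable
    fun h => hsep (hw.trans h)⟩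
  refine (connected_iff_exists_forall_reachable _).mpr ⟨u, fun x => ?_⟩
  rcases hG.connected.preconnected.reachable_deleteEdges_or u v x with hx | hx
  · exact hx.mono hle
  · exact (hw.mono hle).trans (hwv.reachable.trans (hx.mono hle))

theorem IsTree.eq_penultimate_of_forall_dist_le (hG : G.IsTree) {a : V}
    (hmax : ∀ z, G.dist a z ≤ G.dist a w) {p : G.Walk a w} (hp : p.IsPath) (hy : G.Adj w y) : y = p.penultimate := by
  obtain ⟨q, hq⟩ := (hG.connected a y).exists_walk_length_eq_dist
  have hdist : G.dist a w = G.dist a y + 1 := by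
    have := hmax y
    rcases hG.dist_eq_dist_add_one_of_adj a hy with h | h <;> omega
  have hqp : q.concat hy.symm = p := (hG.existsUnique_path a w).unique
    (Walk.isPath_of_length_eq_dist _ (by rw [Walk.length_concat, hq, hdist])) hp
  rw [← hqp, Walk.penultimate_concat]

end MoveEdge

section Degree

variable {V : Type*} [Fintype V] {G : SimpleGraph V} {u v w x : V}

theorem deg_eq_ncard (G : SimpleGraph V) (x : V) : deg G x = (G.neighborSet x).ncard := by
  classical
  rw [deg, ← Nat.card_coe_set_eq, Nat.card_eq_fintype_card, card_neighborSet_eq_degree]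

theorem maxDeg_eq_of_forall_deg_le {a : V} (h : ∀ x, deg G x ≤ deg G a) :
    maxDeg G = deg G a := by
  classical
  unfold maxDeg deg at *
  exact le_antisymm (G.maxDegree_le_of_forall_degree_le _ h) (G.degree_le_maxDegree a)

theorem deg_moveEdge_left (huv : G.Adj u v) (hwu : w ≠ u) :
    deg (G.moveEdge u v w) u + 1 = deg G u := by
  rw [deg_eq_ncard, deg_eq_ncard, neighborSet_moveEdge_left huv hwu]
  exact Set.ncard_sdiff_singleton_add_one huv

theorem deg_moveEdge_right (hwu : w ≠ u) (hwv : w ≠ v) (hnadj : ¬G.Adj w v) :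
    deg (G.moveEdge u v w) w = deg G w + 1 := by
  rw [deg_eq_ncard, deg_eq_ncard, neighborSet_moveEdge_right hwu hwv]
  exact Set.ncard_insert_of_notMem hnadj

theorem deg_moveEdge_of_ne (huv : G.Adj u v) (hwv : w ≠ v) (hnadj : ¬G.Adj w v)
    (hxu : x ≠ u) (hxw : x ≠ w) : deg (G.moveEdge u v w) x = deg G x := by
  rw [deg_eq_ncard, deg_eq_ncard]
  obtain rfl | hxv := eq_or_ne x v
  · rw [neighborSet_moveEdge_pivot hwv, Set.ncard_insert_of_notMem fun h => hnadj h.1.symm]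
    exact Set.ncard_sdiff_singleton_add_one huv.symm
  · rw [neighborSet_moveEdge_of_ne hxu hxv hxw]

theorem forall_deg_moveEdge_le_two {a : V} (hdeg : ∀ y, y ≠ a → deg G y ≤ 2) (huv : G.Adj u v)
    (hwu : w ≠ u) (hwv : w ≠ v) (hnadj : ¬G.Adj w v) (hw : deg G w ≤ 1) :
    ∀ y, y ≠ a → deg (G.moveEdge u v w) y ≤ 2 := by
  intro y hya
  obtain rfl | hyu := eq_or_ne y u
  · have := deg_moveEdge_left huv hwu (w := w)
    have := hdeg y hya
    omega
  obtain rfl | hyw := eq_or_ne y w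
  · rw [deg_moveEdge_right hwu hwv hnadj]
    omega
  · rw [deg_moveEdge_of_ne huv hwv hnadj hyu hyw]
    exact hdeg y hya

end Degree

section Zagreb

variable {V : Type*} [Fintype V]

noncomputable def grmWeight (l : ℝ) (G : SimpleGraph V) : Sym2 V → ℝ :=
  Sym2.lift ⟨fun a b => ((deg G a : ℝ) + l) * ((deg G b : ℝ) + l), fun a b => by ring⟩

@[simp]
theorem grmWeight_mk (l : ℝ) (G : SimpleGraph V) (a b : V) :
    grmWeight l G s(a, b) = ((deg G a : ℝ) + l) * ((deg G b : ℝ) + l) := rfl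

theorem GRM_eq_sum (l : ℝ) (G : SimpleGraph V) [Fintype G.edgeSet] :
    GRM l G = ∑ e ∈ G.edgeFinset, grmWeight l G e := by
  classical
  unfold GRM grmWeight deg
  congr!

theorem GRM_sub_GRM [DecidableEq V] (l : ℝ) {G G' : SimpleGraph V} [Fintype G.edgeSet]
    [Fintype G'.edgeSet] {A A' : Finset (Sym2 V)} (hA : A ⊆ G.edgeFinset)
    (hA' : A' ⊆ G'.edgeFinset) (hrest : G'.edgeFinset \ A' = G.edgeFinset \ A)
    (hdeg : ∀ x y, G.Adj x y → s(x, y) ∉ A → deg G' x = deg G x) :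
    GRM l G' - GRM l G = ∑ e ∈ A', grmWeight l G' e - ∑ e ∈ A, grmWeight l G e := by
  have hweight : ∀ e ∈ G.edgeFinset \ A, grmWeight l G' e = grmWeight l G e := by
    intro e he
    induction e using Sym2.ind with
    | h x y =>
      obtain ⟨hxy, hA⟩ := Finset.mem_sdiff.mp he
      rw [mem_edgeFinset, mem_edgeSet] at hxy
      rw [grmWeight_mk, grmWeight_mk, hdeg x y hxy hA,
        hdeg y x hxy.symm (Sym2.eq_swap (a := y) ▸ hA)]
  rw [GRM_eq_sum, GRM_eq_sum, ← Finset.sum_sdiff hA, ← Finset.sum_sdiff hA', hrest,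
    Finset.sum_congr rfl hweight]
  ring

theorem deg_moveEdge_of_adj_of_notMem [DecidableEq V] {G : SimpleGraph V} {a u v w x y z : V}
    (hu : G.neighborSet u = {a, v}) (hw : G.neighborSet w = {x}) (hwv : w ≠ v)
    (hnadj : ¬G.Adj w v) (hyz : G.Adj y z)
    (hyzA : s(y, z) ∉ ({s(u, v), s(a, u), s(w, x)} : Finset (Sym2 V))) :
    deg (G.moveEdge u v w) y = deg G y := by
  have huv : G.Adj u v := by simp [← mem_neighborSet, hu]
  refine deg_moveEdge_of_ne huv hwv hnadj (fun hyu => hyzA ?_) (fun hyw => hyzA ?_)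
  · subst hyu
    have hz : z ∈ G.neighborSet y := hyz
    rw [hu] at hz
    rcases hz with rfl | rfl <;> simp [Sym2.eq_swap]
  · subst hyw
    have hz : z ∈ G.neighborSet y := hyz
    rw [hw, Set.mem_singleton_iff] at hz
    simp [hz]

theorem GRM_moveEdge (l : ℝ) {G : SimpleGraph V} {a u v w x : V}
    (hu : G.neighborSet u = {a, v}) (hav : a ≠ v) (hw : G.neighborSet w = {x})
    (hwv : w ≠ v) (hnadj : ¬G.Adj w v) (hwa : w ≠ a) :
    GRM l (G.moveEdge u v w) = GRM l G + deg G x - deg G a := by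
  classical
  obtain ⟨hua, huv⟩ : G.Adj u a ∧ G.Adj u v := by simp [← mem_neighborSet, hu]
  have hwx : G.Adj w x := by simp [← mem_neighborSet, hw]
  have hdu : deg G u = 2 := by rw [deg_eq_ncard, hu, Set.ncard_pair hav]
  have hdw : deg G w = 1 := by rw [deg_eq_ncard, hw, Set.ncard_singleton]
  have hwu : w ≠ u := fun h => by rw [h] at hdw; omega
  have hxu : x ≠ u := by
    rintro rfl
    have : w ∈ G.neighborSet x := hwx.symm
    rw [hu] at this
    rcases this with h | h
    exacts [hwa h, hwv h]
  have hau : a ≠ u := hua.ne'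
  have hdu' := deg_moveEdge_left huv hwu
  have hdw' := deg_moveEdge_right hwu hwv hnadj
  have hdeg : ∀ y, y ≠ u → y ≠ w → deg (G.moveEdge u v w) y = deg G y :=
    fun y => deg_moveEdge_of_ne huv hwv hnadj
  have hsub := GRM_sub_GRM l (G := G) (G' := G.moveEdge u v w)
    (A := {s(u, v), s(a, u), s(w, x)}) (A' := {s(w, v), s(a, u), s(w, x)})
    (by simp [Finset.insert_subset_iff, huv, hua.symm, hwx])
    (by simp [Finset.insert_subset_iff, moveEdge_adj, hua.symm, hwx, hwv, hav, hwu, hau])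
    (edgeFinset_moveEdge_sdiff_insert hwv hnadj _)
    fun y z hyz hyzA => deg_moveEdge_of_adj_of_notMem hu hw hwv hnadj hyz hyzA
  rw [Finset.sum_insert (by simp; grind), Finset.sum_pair (by simp; grind),
    Finset.sum_insert (by simp; grind), Finset.sum_pair (by simp; grind)] at hsub
  simp only [grmWeight_mk, hdeg a hau hwa.symm, hdeg v huv.ne' hwv.symm,
    hdeg x hxu hwx.ne', hdw', hdw, hdu, show deg (G.moveEdge u v w) u = 1 by omega] at hsub
  push_cast at hsub
  linear_combination hsub

end Zagreb

section Spider

variable {V : Type*} [Fintype V] {G : SimpleGraph V}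

theorem exists_neighborSet_eq_pair {a m : V} (ham : G.Adj m a) (hm : deg G m = 2) :
    ∃ v, a ≠ v ∧ G.neighborSet m = {a, v} := by
  obtain ⟨x, y, hxy, hN⟩ := Set.ncard_eq_two.mp ((deg_eq_ncard G m).symm.trans hm)
  have ha : a ∈ G.neighborSet m := ham
  rw [hN] at ha
  rcases ha with rfl | rfl
  exacts [⟨y, hxy, hN⟩, ⟨x, hxy.symm, hN.trans (Set.pair_comm x _)⟩]

theorem IsTree.exists_moveEdge_of_two_legs (hG : G.IsTree) {a : V}
    (hlegs : 2 ≤ {v | G.Adj a v ∧ deg G v = 2}.ncard) :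
    ∃ u v w x, G.neighborSet u = {a, v} ∧ a ≠ v ∧ G.neighborSet w = {x} ∧ x ≠ a ∧ w ≠ a ∧
      w ≠ u ∧ (G.deleteEdges {s(u, v)}).Reachable u w := by
  obtain ⟨m₁, m₂, hm₁, hm₂, hm⟩ := (Set.one_lt_ncard_iff (Set.toFinite _)).mp hlegs
  obtain ⟨z, haz, hz⟩ := exists_neighborSet_eq_pair hm₁.1.symm hm₁.2
  have : Nonempty V := ⟨a⟩
  obtain ⟨w, hw⟩ := Finite.exists_max (G.dist a)
  have hdist : 2 ≤ G.dist a w := by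
    have hm₁z : G.Adj m₁ z := by simp [← mem_neighborSet, hz]
    have := hG.connected.dist_eq_zero_iff.not.mpr haz
    have := dist_eq_one_iff_adj.mpr hm₁.1
    have := hw z
    rcases hG.dist_eq_dist_add_one_of_adj a hm₁z with h | h <;> omega
  obtain ⟨p, hp, hpl⟩ := hG.connected.exists_path_of_dist a w
  have hpnil : ¬p.Nil := by rw [Walk.not_nil_iff_lt_length]; omega
  obtain ⟨u, hu, hsnd⟩ : ∃ u ∈ ({v | G.Adj a v ∧ deg G v = 2} : Set V), u ≠ p.snd := by
    by_cases h : m₁ = p.snd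
    exacts [⟨m₂, hm₂, fun h' => hm (h.trans h'.symm)⟩, ⟨m₁, hm₁, h⟩]
  obtain ⟨v, hav, hN⟩ := exists_neighborSet_eq_pair hu.1.symm hu.2
  have hup : u ∉ p.support := fun h => hsnd (hG.isAcyclic.eq_snd_of_adj_start hp hu.1 h)
  refine ⟨u, v, w, p.penultimate, hN, hav, ?_, ?_, ?_, ?_, ?_⟩
  · ext y
    exact ⟨hG.eq_penultimate_of_forall_dist_le hw hp, fun h => h ▸ (p.adj_penultimate hpnil).symm⟩
  · intro h
    have := dist_eq_one_iff_adj.mpr (h ▸ p.adj_penultimate hpnil)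
    omega
  · rintro rfl
    simp at hdist
  · rintro rfl
    exact hup p.end_mem_support
  · have hua : (G.deleteEdges {s(u, v)}).Adj u a := by
      simp [hu.1.symm, hav, hu.1.ne]
    refine hua.reachable.trans ⟨p.toDeleteEdges {s(u, v)} fun e he h => hup ?_⟩
    rw [Set.mem_singleton_iff] at h
    exact p.fst_mem_support_of_mem_edges (h ▸ he)

end Spider

end SimpleGraph

theorem stmt4_general {V : Type*} [Fintype V] (l : ℝ)
    (Δ : ℕ) (hΔ : 3 ≤ Δ) (T : SimpleGraph V) (hT : T.IsTree)
    (a : V) (hdega : deg T a = Δ)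
    (hspider : ∀ v : V, v ≠ a → deg T v ≤ 2)
    (hlegs : 2 ≤ {v : V | T.Adj a v ∧ deg T v = 2}.ncard) :
    ∃ T' : SimpleGraph V, T'.IsTree ∧
      (∃ a' : V, ∀ v : V, v ≠ a' → deg T' v ≤ 2) ∧
      maxDeg T' = Δ ∧ GRM l T' < GRM l T := by
  obtain ⟨u, v, w, x, hu, hav, hw, hxa, hwa, hwu, hreach⟩ := hT.exists_moveEdge_of_two_legs hlegs
  obtain ⟨hua, huv⟩ : T.Adj u a ∧ T.Adj u v := by simp [← mem_neighborSet, hu]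
  have hsep := hT.isAcyclic.not_reachable_deleteEdges huv
  have hwv : w ≠ v := fun h => hsep (h ▸ hreach)
  have hnadj : ¬T.Adj w v := fun h => hsep (hreach.trans (Adj.reachable (by simp [h, hwu, hwv])))
  have hdw : deg T w ≤ 1 := by rw [deg_eq_ncard, hw, Set.ncard_singleton]
  have hspider' := forall_deg_moveEdge_le_two hspider huv hwu hwv hnadj hdw
  have hdega' : deg (T.moveEdge u v w) a = Δ := by
    rw [deg_moveEdge_of_ne huv hwv hnadj hua.ne' hwa.symm, hdega]
  refine ⟨_, hT.moveEdge huv hreach, ⟨a, hspider'⟩, ?_, ?_⟩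
  · rw [maxDeg_eq_of_forall_deg_le fun y => ?_, hdega']
    rcases eq_or_ne y a with rfl | hya
    exacts [le_rfl, hdega' ▸ (hspider' y hya).trans (by omega)]
  · rw [GRM_moveEdge l hu hav hw hwv hnadj hwa, hdega]
    have hx : (deg T x : ℝ) ≤ 2 := by exact_mod_cast hspider x hxa
    have hΔ' : (3 : ℝ) ≤ Δ := by exact_mod_cast hΔ
    linarith

theorem stmt4 {V : Type*} [Fintype V] (l : ℝ) (hl : -1/2 ≤ l)
    (Δ : ℕ) (hΔ : 3 ≤ Δ) (T : SimpleGraph V) (hT : T.IsTree)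
    (hmax : maxDeg T = Δ) (a : V) (hdega : deg T a = Δ)
    (hspider : ∀ v : V, v ≠ a → deg T v ≤ 2)
    (hlegs : 2 ≤ {v : V | T.Adj a v ∧ deg T v = 2}.ncard) :
    ∃ T' : SimpleGraph V, T'.IsTree ∧
      (∃ a' : V, ∀ v : V, v ≠ a' → deg T' v ≤ 2) ∧
      maxDeg T' = Δ ∧ GRM l T' < GRM l T :=
  stmt4_general l Δ hΔ T hT a hdega hspider hlegs
end

section
/- Let λ ≥ -1/2 be a real number and let Δ ≥ 3 satisfy 2λ+6 < Δ and Δ < n-3. If U is a unicyclic graph with n vertices and maximum degree Δ, then GRM_λ(U) ≥ (Δ+λ)(Δ+Δλ+1) + (n-Δ)(2+λ)² + 3(2+λ). -/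
open SimpleGraph

/-!
Writing `deg v + λ = (deg v - 2) + (2 + λ)` and using `|E| = |V| = n` gives
`GRM_λ(U) = Σ_{ab ∈ E} (deg a - 2)(deg b - 2) + (2 + λ) Σ_v (deg v - 1)(deg v - 2)
  + n (2 + λ)²`.
An edge product is negative only on an edge joining a pendant vertex to a vertex `v` of degree
`d ≥ 3`, where it equals `-(d - 2)`. Charging these edges to `v` bounds `GRM_λ(U) - n (2 + λ)²`
below by a sum of vertex charges `(2 + λ)(d - 1)(d - 2) - p (d - 2)`, `p` the number of pendant
neighbours, each nonnegative when `λ ≥ -1/2`. If a vertex `w` of degree `Δ` has at most `Δ - 2`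
pendant neighbours, its charge alone suffices (this is where `2λ + 6 ≤ Δ` enters). Otherwise `w`
lies off the cycle, and the cycle vertex where a path from `w` enters the cycle has three
non-pendant neighbours; its charge supplies the missing `2λ + 4`.
-/

open Finset

theorem neg_ite_le_mul_sub_two {a b : ℕ} (ha : 1 ≤ a) (hb : 1 ≤ b) :
    -((if b = 1 then max ((a : ℝ) - 2) 0 else 0) + (if a = 1 then max ((b : ℝ) - 2) 0 else 0))
      ≤ ((a : ℝ) - 2) * ((b : ℝ) - 2) := by
  rcases ha.eq_or_lt with rfl | ha2 <;> rcases hb.eq_or_lt with rfl | hb2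
  · norm_num
  · have hb2' : (2 : ℝ) ≤ b := by exact_mod_cast hb2
    simp only [hb2.ne', if_false, if_true, max_eq_left (sub_nonneg.2 hb2'), Nat.cast_one]
    linarith
  · have ha2' : (2 : ℝ) ≤ a := by exact_mod_cast ha2
    simp only [ha2.ne', if_false, if_true, max_eq_left (sub_nonneg.2 ha2'), Nat.cast_one]
    linarith
  · have ha2' : (2 : ℝ) ≤ a := by exact_mod_cast ha2
    have hb2' : (2 : ℝ) ≤ b := by exact_mod_cast hb2
    simp only [ha2.ne', hb2.ne', if_false]
    nlinarith

/-- The `max` keeps an edge with both ends pendant from costing anything. -/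
noncomputable def zagrebCharge (l : ℝ) (d p : ℕ) : ℝ :=
  (2 + l) * (((d : ℝ) - 1) * ((d : ℝ) - 2)) - p * max ((d : ℝ) - 2) 0

theorem le_zagrebCharge {l : ℝ} {d p : ℕ} (k : ℝ) (hk : p + k ≤ d) (hd : 2 ≤ d) :
    ((d : ℝ) - 2) * ((1 + l) * ((d : ℝ) - 1) + k - 1) ≤ zagrebCharge l d p := by
  have hd' : (2 : ℝ) ≤ d := by exact_mod_cast hd
  rw [zagrebCharge, max_eq_left (sub_nonneg.2 hd')]
  nlinarith [mul_nonneg (sub_nonneg.2 hd') (sub_nonneg.2 hk)]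

theorem zagrebCharge_nonneg {l : ℝ} (hl : -1 / 2 ≤ l) {d p : ℕ} (hp : p ≤ d) :
    0 ≤ zagrebCharge l d p := by
  rcases le_or_gt 3 d with hd | hd
  · have hd' : (3 : ℝ) ≤ d := by exact_mod_cast hd
    have hbound := le_zagrebCharge (l := l) 0 (by simpa using hp) (by omega)
    have hfactor : 0 ≤ (1 + l) * ((d : ℝ) - 1) - 1 := by
      nlinarith [mul_nonneg (by linarith : (0 : ℝ) ≤ 1 / 2 + l)
        (by linarith : (0 : ℝ) ≤ d - 1)]
    nlinarith [mul_nonneg (by linarith : (0 : ℝ) ≤ d - 2) hfactor]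
  · interval_cases d <;> norm_num [zagrebCharge]
    linarith

namespace SimpleGraph

variable {V : Type*} {G : SimpleGraph V}

theorem Walk.IsCycle.exists_adj_adj_of_mem_support {u v : V} {c : G.Walk u u}
    (hc : c.IsCycle) (hv : v ∈ c.support) :
    ∃ a b, a ≠ b ∧ G.Adj v a ∧ G.Adj v b ∧ a ∈ c.support ∧ b ∈ c.support := by
  obtain ⟨a, b, hab, hnbr⟩ := Set.ncard_eq_two.1 (hc.ncard_neighborSet_toSubgraph_eq_two hv)
  have hcycle_nbr : ∀ x ∈ c.toSubgraph.neighborSet v, G.Adj v x ∧ x ∈ c.support :=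
    fun x hx => ⟨c.toSubgraph.adj_sub hx, by simpa using c.toSubgraph.edge_vert hx.symm⟩
  obtain ⟨ha, ha'⟩ := hcycle_nbr a (by simp [hnbr])
  obtain ⟨hb, hb'⟩ := hcycle_nbr b (by simp [hnbr])
  exact ⟨a, b, hab, ha, hb, ha', hb'⟩

variable [Fintype V] [DecidableRel G.Adj]

theorem sum_edgeFinset_eq_sum_sum_neighborFinset [DecidableEq V] {M : Type*}
    [AddCommMonoid M] (f : Sym2 V → M) (h : V → V → M)
    (hfh : ∀ a b, G.Adj a b → f s(a, b) = h a b + h b a) :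
    ∑ e ∈ G.edgeFinset, f e = ∑ v, ∑ u ∈ G.neighborFinset v, h v u := by
  have hdarts : ∑ e ∈ G.edgeFinset, f e = ∑ d : G.Dart, h d.fst d.snd := by
    rw [← sum_fiberwise_of_maps_to (g := Dart.edge) (t := G.edgeFinset) (by simp)]
    refine sum_congr rfl fun e he => ?_
    induction e using Sym2.ind with | _ a b => ?_
    let d : G.Dart := ⟨(a, b), mem_edgeFinset.1 he⟩
    rw [show s(a, b) = d.edge from rfl, d.edge_fiber, sum_pair d.symm_ne.symm]
    exact hfh a b d.adj
  rw [hdarts, ← sum_fiberwise_of_maps_to (g := fun d : G.Dart => d.fst) (t := univ) (by simp)]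
  refine sum_congr rfl fun v _ => ?_
  rw [dart_fst_fiber, sum_image fun _ _ _ _ hxy => G.dartOfNeighborSet_injective v hxy,
    neighborFinset_def, ← sum_set_coe (s := G.neighborSet v)]
  rfl

variable (G) in
def pendantNeighborFinset (v : V) : Finset V := {u ∈ G.neighborFinset v | G.degree u = 1}

theorem card_pendantNeighborFinset_le (v : V) : #(G.pendantNeighborFinset v) ≤ G.degree v :=
  (card_filter_le _ _).trans_eq (card_neighborFinset_eq_degree G v)

theorem card_pendantNeighborFinset_add_card_le [DecidableEq V] {v : V} {s : Finset V}
    (hs : s ⊆ G.neighborFinset v) (hs2 : ∀ u ∈ s, 2 ≤ G.degree u) :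
    #(G.pendantNeighborFinset v) + #s ≤ G.degree v := by
  rw [← card_neighborFinset_eq_degree, ← card_union_of_disjoint]
  · exact card_le_card (union_subset (filter_subset _ _) hs)
  · refine Finset.disjoint_left.2 fun u hu hus => ?_
    have := (mem_filter.1 hu).2
    have := hs2 u hus
    omega

variable (G) in
theorem GRM_eq [DecidableEq V] (l : ℝ) :
    GRM l G = ∑ e ∈ G.edgeFinset,
        Sym2.lift ⟨fun a b => ((G.degree a : ℝ) - 2) * ((G.degree b : ℝ) - 2),
          fun _ _ => mul_comm _ _⟩ e
      + (2 + l) * ∑ v, (G.degree v : ℝ) * ((G.degree v : ℝ) - 2)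
      + #G.edgeFinset * (2 + l) ^ 2 := by
  have hlinear : ∑ e ∈ G.edgeFinset,
      Sym2.lift ⟨fun a b => ((G.degree a : ℝ) - 2) + ((G.degree b : ℝ) - 2),
        fun _ _ => add_comm _ _⟩ e = ∑ v, (G.degree v : ℝ) * ((G.degree v : ℝ) - 2) := by
    rw [sum_edgeFinset_eq_sum_sum_neighborFinset _ (fun a _ => (G.degree a : ℝ) - 2)
      fun _ _ _ => rfl]
    simp only [sum_const, card_neighborFinset_eq_degree, nsmul_eq_mul]
  have hGRM : GRM l G = ∑ e ∈ G.edgeFinset,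
      Sym2.lift ⟨fun a b => ((G.degree a : ℝ) + l) * ((G.degree b : ℝ) + l),
        fun _ _ => mul_comm _ _⟩ e := by
    unfold GRM
    congr!
  rw [hGRM, ← hlinear, mul_sum, ← nsmul_eq_mul, ← sum_const, ← sum_add_distrib,
    ← sum_add_distrib]
  refine sum_congr rfl fun e _ => ?_
  induction e using Sym2.ind
  simp only [Sym2.lift_mk]
  ring

theorem neg_sum_le_sum_edgeFinset_mul_sub_two [DecidableEq V] :
    -∑ v, #(G.pendantNeighborFinset v) * max ((G.degree v : ℝ) - 2) 0
      ≤ ∑ e ∈ G.edgeFinset,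
          Sym2.lift ⟨fun a b => ((G.degree a : ℝ) - 2) * ((G.degree b : ℝ) - 2),
            fun _ _ => mul_comm _ _⟩ e := by
  set loss : V → V → ℝ :=
    fun v u => if G.degree u = 1 then max ((G.degree v : ℝ) - 2) 0 else 0
  have hloss : ∑ e ∈ G.edgeFinset, Sym2.lift ⟨fun a b => -(loss a b + loss b a),
      fun _ _ => by simp only [add_comm]⟩ e =
      -∑ v, #(G.pendantNeighborFinset v) * max ((G.degree v : ℝ) - 2) 0 := by
    rw [sum_edgeFinset_eq_sum_sum_neighborFinset _ (fun a b => -loss a b)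
      fun _ _ _ => neg_add _ _, ← sum_neg_distrib]
    refine sum_congr rfl fun v _ => ?_
    rw [sum_neg_distrib, ← sum_filter, sum_const, nsmul_eq_mul]
    rfl
  rw [← hloss]
  refine sum_le_sum fun e he => ?_
  induction e using Sym2.ind with | _ a b => ?_
  have hab : G.Adj a b := mem_edgeFinset.1 he
  exact neg_ite_le_mul_sub_two (G.degree_pos_iff_exists_adj a |>.2 ⟨b, hab⟩)
    (G.degree_pos_iff_exists_adj b |>.2 ⟨a, hab.symm⟩)

theorem sum_zagrebCharge_add_le_GRM [DecidableEq V] (l : ℝ)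
    (hE : #G.edgeFinset = Fintype.card V) :
    ∑ v, zagrebCharge l (G.degree v) #(G.pendantNeighborFinset v) + Fintype.card V * (2 + l) ^ 2
      ≤ GRM l G := by
  have hdefect : ∑ v, ((G.degree v : ℝ) - 2) = 0 := by
    have hsum := congrArg (Nat.cast (R := ℝ)) G.sum_degrees_eq_twice_card_edges
    push_cast at hsum
    rw [sum_sub_distrib, hsum, hE, sum_const, card_univ, nsmul_eq_mul]
    ring
  have hsq : ∑ v, (G.degree v : ℝ) * ((G.degree v : ℝ) - 2)
      = ∑ v, ((G.degree v : ℝ) - 1) * ((G.degree v : ℝ) - 2) := by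
    rw [← add_zero (∑ v, ((G.degree v : ℝ) - 1) * _), ← hdefect, ← sum_add_distrib]
    exact sum_congr rfl fun v _ => by ring
  rw [GRM_eq, hsq, hE]
  have hedges := G.neg_sum_le_sum_edgeFinset_mul_sub_two
  simp only [zagrebCharge, sum_sub_distrib, ← mul_sum]
  linarith

theorem two_le_degree_of_adj_of_adj {v a b : V} (hab : a ≠ b) (ha : G.Adj v a) (hb : G.Adj v b) :
    2 ≤ G.degree v := by
  classical
  rw [← card_neighborFinset_eq_degree, ← card_pair hab]
  exact card_le_card (by simp [insert_subset_iff, ha, hb])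

theorem Walk.IsCycle.two_le_degree {u v : V} {c : G.Walk u u} (hc : c.IsCycle)
    (hv : v ∈ c.support) : 2 ≤ G.degree v := by
  obtain ⟨a, b, hab, ha, hb, -, -⟩ := hc.exists_adj_adj_of_mem_support hv
  exact two_le_degree_of_adj_of_adj hab ha hb

theorem Walk.IsCycle.card_pendantNeighborFinset_add_two_le [DecidableEq V] {u v : V}
    {c : G.Walk u u} (hc : c.IsCycle) (hv : v ∈ c.support) :
    #(G.pendantNeighborFinset v) + 2 ≤ G.degree v := by
  obtain ⟨a, b, hab, ha, hb, ha', hb'⟩ := hc.exists_adj_adj_of_mem_support hv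
  rw [← card_pair hab]
  refine card_pendantNeighborFinset_add_card_le (by simp [insert_subset_iff, ha, hb]) ?_
  simp only [mem_insert, mem_singleton]
  rintro x (rfl | rfl)
  exacts [hc.two_le_degree ha', hc.two_le_degree hb']

theorem Walk.exists_adj_of_notMem_of_mem (S : Set V) {a b : V} (p : G.Walk a b)
    (ha : a ∉ S) (hb : b ∈ S) :
    ∃ z v, G.Adj z v ∧ z ∉ S ∧ v ∈ S ∧ (z = a ∨ 2 ≤ G.degree z) := by
  induction p with
  | nil => exact absurd hb ha
  | @cons a a' b h q ih =>
    by_cases ha' : a' ∈ S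
    · exact ⟨a, a', h, ha, ha', Or.inl rfl⟩
    obtain ⟨z, v, hzv, hz, hv, rfl | hdeg⟩ := ih ha' hb
    · exact ⟨z, v, hzv, hz, hv,
        Or.inr (two_le_degree_of_adj_of_adj (by rintro rfl; exact ha hv) h.symm hzv)⟩
    · exact ⟨z, v, hzv, hz, hv, Or.inr hdeg⟩

theorem Connected.exists_adj_two_le_degree_of_notMem_support (hconn : G.Connected)
    {u w : V} {c : G.Walk u u} (hc : c.IsCycle) (hw : w ∉ c.support) :
    ∃ x, G.Adj w x ∧ 2 ≤ G.degree x := by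
  by_contra! hnbr
  obtain ⟨p⟩ := hconn.preconnected w u
  have hu : u ∉ {x | x = w ∨ G.Adj w x} := by
    rintro (rfl | hwu)
    · exact hw c.start_mem_support
    · exact (hnbr u hwu).not_ge (hc.two_le_degree c.start_mem_support)
  obtain ⟨d, -, hfst | hfst, hsnd⟩ := p.exists_boundary_dart _ (Or.inl rfl) hu
  · exact hsnd (Or.inr (hfst ▸ d.adj))
  · exact (hnbr _ hfst).not_ge
      (two_le_degree_of_adj_of_adj (fun h => hsnd (Or.inl h.symm)) hfst.symm d.adj)

theorem Connected.exists_mem_support_card_pendantNeighborFinset_add_three_le [DecidableEq V]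
    (hconn : G.Connected) {u w : V} {c : G.Walk u u} (hc : c.IsCycle) (hw : w ∉ c.support)
    (hw2 : 2 ≤ G.degree w) :
    ∃ v ∈ c.support, #(G.pendantNeighborFinset v) + 3 ≤ G.degree v := by
  obtain ⟨p⟩ := hconn.preconnected w u
  obtain ⟨z, v, hzv, hz, hv, hz2⟩ :=
    p.exists_adj_of_notMem_of_mem {x | x ∈ c.support} hw c.start_mem_support
  replace hz2 : 2 ≤ G.degree z := by rcases hz2 with rfl | h <;> assumption
  obtain ⟨a, b, hab, ha, hb, ha', hb'⟩ := hc.exists_adj_adj_of_mem_support hv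
  have hza : z ≠ a := fun h => hz (h ▸ ha')
  have hzb : z ≠ b := fun h => hz (h ▸ hb')
  refine ⟨v, hv, ?_⟩
  have hcard : #{z, a, b} = 3 := by
    rw [card_insert_of_notMem (by simp [hza, hzb]), card_pair hab]
  rw [← hcard]
  refine card_pendantNeighborFinset_add_card_le
    (by simp [insert_subset_iff, hzv.symm, ha, hb]) ?_
  simp only [mem_insert, mem_singleton]
  rintro x (rfl | rfl | rfl)
  exacts [hz2, hc.two_le_degree ha', hc.two_le_degree hb']

theorem le_sum_zagrebCharge [DecidableEq V] {l : ℝ} (hl : -1 / 2 ≤ l) (hconn : G.Connected)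
    {u : V} {c : G.Walk u u} (hc : c.IsCycle) {w : V} (hw : 2 * l + 6 ≤ G.degree w) :
    (1 + l) * (((G.degree w : ℝ) - 1) * ((G.degree w : ℝ) - 2)) + 2 * l + 4
      ≤ ∑ v, zagrebCharge l (G.degree v) #(G.pendantNeighborFinset v) := by
  set charge := fun v => zagrebCharge l (G.degree v) #(G.pendantNeighborFinset v)
  have hcharge : ∀ v ∈ univ, 0 ≤ charge v := fun v _ =>
    zagrebCharge_nonneg hl (card_pendantNeighborFinset_le v)
  have hw3 : 3 ≤ G.degree w := by
    have : (2 : ℝ) < G.degree w := by linarith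
    exact_mod_cast this
  by_cases hP2 : #(G.pendantNeighborFinset w) + 2 ≤ G.degree w
  · calc _ ≤ ((G.degree w : ℝ) - 2) * ((1 + l) * ((G.degree w : ℝ) - 1) + 2 - 1) := by
          nlinarith
      _ ≤ charge w := le_zagrebCharge 2 (by exact_mod_cast hP2) (by omega)
      _ ≤ _ := single_le_sum hcharge (mem_univ w)
  have hw_off : w ∉ c.support := fun hws => hP2 (hc.card_pendantNeighborFinset_add_two_le hws)
  obtain ⟨x, hwx, hx⟩ := hconn.exists_adj_two_le_degree_of_notMem_support hc hw_off
  have hP1 : #(G.pendantNeighborFinset w) + 1 ≤ G.degree w := by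
    simpa using card_pendantNeighborFinset_add_card_le (s := {x}) (by simpa using hwx) (by simpa)
  obtain ⟨v, hv, hP3⟩ :=
    hconn.exists_mem_support_card_pendantNeighborFinset_add_three_le hc hw_off (by omega)
  have hv3 : (3 : ℝ) ≤ G.degree v := by exact_mod_cast (by omega : 3 ≤ G.degree v)
  calc _ ≤ ((G.degree w : ℝ) - 2) * ((1 + l) * ((G.degree w : ℝ) - 1) + 1 - 1)
        + ((G.degree v : ℝ) - 2) * ((1 + l) * ((G.degree v : ℝ) - 1) + 3 - 1) := by
        nlinarith [mul_nonneg (by linarith : (0 : ℝ) ≤ G.degree v - 3)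
          (by linarith : (0 : ℝ) ≤ 1 + l)]
    _ ≤ charge w + charge v :=
        add_le_add (le_zagrebCharge 1 (by exact_mod_cast hP1) (by omega))
          (le_zagrebCharge 3 (by exact_mod_cast hP3) (by omega))
    _ ≤ _ := add_le_sum hcharge (mem_univ w) (mem_univ v)
        (by rintro rfl; exact hw_off hv)

end SimpleGraph

theorem IsUnicyclic.card_edgeFinset {V : Type*} [Fintype V] {G : SimpleGraph V}
    [DecidableRel G.Adj] (hG : IsUnicyclic G) : #G.edgeFinset = Fintype.card V := by
  rw [← hG.2, Set.ncard_eq_toFinset_card']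
  rfl

theorem IsUnicyclic.exists_isCycle {V : Type*} [Fintype V] {G : SimpleGraph V}
    (hG : IsUnicyclic G) : ∃ (u : V) (c : G.Walk u u), c.IsCycle := by
  classical
  by_contra! hacyclic
  have htree : G.IsTree := ⟨hG.1, fun u c hc => hacyclic u c hc⟩
  have htree_edges := htree.card_edgeFinset
  rw [hG.card_edgeFinset] at htree_edges
  omega

theorem stmt5_general {V : Type*} [Fintype V] (l : ℝ) (hl : -1/2 ≤ l)
    (n Δ : ℕ) (hlow : 2 * l + 6 < (Δ : ℝ))
    (U : SimpleGraph V) (hU : IsUnicyclic U)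
    (hcard : Fintype.card V = n) (hmax : maxDeg U = Δ) :
    GRM l U ≥ ((Δ : ℝ) + l) * ((Δ : ℝ) + (Δ : ℝ) * l + 1)
      + ((n : ℝ) - (Δ : ℝ)) * (2 + l) ^ 2 + 3 * (2 + l) := by
  classical
  have := hU.1.nonempty
  obtain ⟨w, hw⟩ := U.exists_maximal_degree_vertex
  have hdw : U.degree w = Δ := hw.symm.trans hmax
  obtain ⟨u, c, hc⟩ := hU.exists_isCycle
  have hcharge := le_sum_zagrebCharge hl hU.1 hc (w := w) (by rw [hdw]; exact hlow.le)
  rw [hdw] at hcharge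
  calc _ = (1 + l) * (((Δ : ℝ) - 1) * ((Δ : ℝ) - 2)) + 2 * l + 4 + n * (2 + l) ^ 2 := by ring
    _ ≤ ∑ v, zagrebCharge l (U.degree v) #(U.pendantNeighborFinset v) + n * (2 + l) ^ 2 := by
        gcongr
    _ ≤ GRM l U := hcard ▸ sum_zagrebCharge_add_le_GRM l hU.card_edgeFinset

theorem stmt5 {V : Type*} [Fintype V] (l : ℝ) (hl : -1/2 ≤ l)
    (n Δ : ℕ) (hΔ3 : 3 ≤ Δ) (hlow : 2 * l + 6 < (Δ : ℝ)) (hhigh : Δ < n - 3)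
    (U : SimpleGraph V) (hU : IsUnicyclic U)
    (hcard : Fintype.card V = n) (hmax : maxDeg U = Δ) :
    GRM l U ≥ ((Δ : ℝ) + l) * ((Δ : ℝ) + (Δ : ℝ) * l + 1)
      + ((n : ℝ) - (Δ : ℝ)) * (2 + l) ^ 2 + 3 * (2 + l) :=
  stmt5_general l hl n Δ hlow U hU hcard hmax
end
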